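/- Let T = (T₁,T₂) be a cyclic commuting pair on a Hilbert space H with vanishing defect operator and a cyclic vector f₀ spanning a wandering subspace for T. Suppose S = (S₁,S₂) is another such pair on a Hilbert space K with cyclic wandering vector g₀, and suppose ⟨T_j^m f₀, T_j^p f₀⟩_H = ⟨S_j^m g₀, S_j^p g₀⟩_K for j = 1,2 and all m, p ≥ 0, with ‖f₀‖ = ‖g₀‖. Then there is a unitary U : H → K with U f₀ = g₀ and U T_j = S_j U for j = 1, 2. -/

import Mathlib

open ContinuousLinearMap

variable {H : Type*} [NormedAddCommGroup H] [InnerProductSpace ℂ H] [CompleteSpace H]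

/-- A subspace `W` is wandering for the pair `(T1, T2)` if
`T1^a W ⟂ T1^{b1} T2^{b2} W` whenever `b2 ≠ 0`, and
`T2^a W ⟂ T1^{b1} T2^{b2} W` whenever `b1 ≠ 0`. -/
def IsWandering (T1 T2 : H →L[ℂ] H) (W : Submodule ℂ H) : Prop :=
  ∀ f ∈ W, ∀ g ∈ W, ∀ a b1 b2 : ℕ,
    (b2 ≠ 0 → (inner ℂ ((T1 ^ a) f) ((T1 ^ b1 * T2 ^ b2) g) : ℂ) = 0) ∧
    (b1 ≠ 0 → (inner ℂ ((T2 ^ a) f) ((T1 ^ b1 * T2 ^ b2) g) : ℂ) = 0)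

set_option linter.unusedSectionVars false
set_option maxHeartbeats 800000


lemma aux_extend {H K : Type*} [NormedAddCommGroup H] [InnerProductSpace ℂ H]
    [NormedAddCommGroup K] [InnerProductSpace ℂ K] [CompleteSpace K]
    (x : ℕ × ℕ → H) (y : ℕ × ℕ → K)
    (hgram : ∀ i j, (inner ℂ (x i) (x j) : ℂ) = inner ℂ (y i) (y j))
    (hdense : Dense ((Submodule.span ℂ (Set.range x) : Submodule ℂ H) : Set H)) :
    ∃ Φ : H →L[ℂ] K, (∀ i, Φ (x i) = y i) ∧ ∀ z, ‖Φ z‖ = ‖z‖ := by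
  set F : ((ℕ × ℕ) →₀ ℂ) →ₗ[ℂ] H := Finsupp.linearCombination ℂ x with hF
  set G : ((ℕ × ℕ) →₀ ℂ) →ₗ[ℂ] K := Finsupp.linearCombination ℂ y with hG
  have hFG : ∀ c d, (inner ℂ (F c) (F d) : ℂ) = inner ℂ (G c) (G d) := by
    intro c d
    simp only [hF, hG, Finsupp.linearCombination_apply, Finsupp.sum, sum_inner, inner_sum,
      inner_smul_left, inner_smul_right, hgram]
  have hnormFG : ∀ c, ‖F c‖ = ‖G c‖ := by
    intro c
    have h := hFG c c
    rw [inner_self_eq_norm_sq_to_K, inner_self_eq_norm_sq_to_K] at h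
    have h2 : (‖F c‖ : ℝ) ^ 2 = ‖G c‖ ^ 2 := by exact_mod_cast h
    nlinarith [norm_nonneg (F c), norm_nonneg (G c)]
  have hker : LinearMap.ker F ≤ LinearMap.ker G := by
    intro c hc
    rw [LinearMap.mem_ker] at hc ⊢
    have h := hnormFG c
    rw [hc, norm_zero] at h
    exact norm_eq_zero.mp h.symm
  set G' : (((ℕ × ℕ) →₀ ℂ) ⧸ LinearMap.ker F) →ₗ[ℂ] K := (LinearMap.ker F).liftQ G hker with hG'
  set e := F.quotKerEquivRange with he
  set φ : LinearMap.range F →ₗ[ℂ] K := G'.comp e.symm.toLinearMap with hφdef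
  have hφ : ∀ c (h : F c ∈ LinearMap.range F), φ ⟨F c, h⟩ = G c := by
    intro c h
    have h1 : e.symm ⟨F c, h⟩ = (LinearMap.ker F).mkQ c :=
      F.quotKerEquivRange_symm_apply_image c h
    simp only [hφdef, LinearMap.comp_apply, LinearEquiv.coe_toLinearMap, h1, hG',
      Submodule.mkQ_apply, Submodule.liftQ_apply]
  have hφn : ∀ v : LinearMap.range F, ‖φ v‖ = ‖v‖ := by
    rintro ⟨v, c, rfl⟩
    rw [hφ c ⟨c, rfl⟩]
    exact (hnormFG c).symm
  set Li : (LinearMap.range F) →ₗᵢ[ℂ] K := ⟨φ, hφn⟩ with hLi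
  have hr : LinearMap.range F = Submodule.span ℂ (Set.range x) :=
    Finsupp.range_linearCombination (R := ℂ) (v := x)
  have hdense' : Dense ((LinearMap.range F : Submodule ℂ H) : Set H) := by rw [hr]; exact hdense
  set eM : (LinearMap.range F) →L[ℂ] H := (LinearMap.range F).subtypeL with heM
  have h_e : IsUniformInducing eM := isometry_subtype_coe.isUniformInducing
  have h_dense : DenseRange eM := by
    have : Set.range eM = ((LinearMap.range F : Submodule ℂ H) : Set H) := Subtype.range_coe
    rw [DenseRange, this]
    exact hdense'
  set Φ := Li.toContinuousLinearMap.extend eM with hΦ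
  have hΦe : ∀ v : LinearMap.range F, Φ (v : H) = φ v := fun v =>
    ContinuousLinearMap.extend_eq (f := Li.toContinuousLinearMap) (e := eM) h_dense h_e v
  have hΦn : ∀ z, ‖Φ z‖ = ‖z‖ := by
    have heq : (fun z => ‖Φ z‖) = fun z : H => ‖z‖ := by
      refine h_dense.equalizer (continuous_norm.comp Φ.continuous) continuous_norm ?_
      funext v
      simp only [Function.comp_apply]
      have h1 : eM v = (v : H) := rfl
      rw [h1, hΦe v, hφn v]
      rfl
    exact fun z => congrFun heq z
  refine ⟨Φ, fun i => ?_, hΦn⟩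
  have hc : F (Finsupp.single i 1) = x i := by
    simp [hF, Finsupp.linearCombination_single]
  have hmem : x i ∈ LinearMap.range F := ⟨Finsupp.single i 1, hc⟩
  have : Φ (x i) = φ ⟨x i, hmem⟩ := hΦe ⟨x i, hmem⟩
  rw [this]
  have := hφ (Finsupp.single i 1) (hc ▸ hmem)
  simp only [hc] at this
  rw [this, hG]
  simp [Finsupp.linearCombination_single]

section Gram

variable {H : Type*} [NormedAddCommGroup H] [InnerProductSpace ℂ H] [CompleteSpace H]

lemma mono_step1 (T1 T2 : H →L[ℂ] H) (f0 : H) (m n : ℕ) :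
    T1 ((T1 ^ m * T2 ^ n) f0) = (T1 ^ (m + 1) * T2 ^ n) f0 := by
  rw [← ContinuousLinearMap.mul_apply, ← mul_assoc, ← pow_succ']

lemma mono_step2 (T1 T2 : H →L[ℂ] H) (hcomm : T1 * T2 = T2 * T1) (f0 : H) (m n : ℕ) :
    T2 ((T1 ^ m * T2 ^ n) f0) = (T1 ^ m * T2 ^ (n + 1)) f0 := by
  have hC : Commute T1 T2 := hcomm
  rw [← ContinuousLinearMap.mul_apply, ← mul_assoc, (hC.symm.pow_right m).eq,
    mul_assoc, ← pow_succ']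

/-- single-pair defect identity. -/
lemma rec_identity (T1 T2 : H →L[ℂ] H)
    (hdef : (1 : H →L[ℂ] H) - adjoint T1 * T1 - adjoint T2 * T2
      + adjoint T1 * (adjoint T2 * (T1 * T2)) = 0) (u v : H) :
    (inner ℂ u v : ℂ) + inner ℂ (T2 (T1 u)) (T1 (T2 v))
      = inner ℂ (T1 u) (T1 v) + inner ℂ (T2 u) (T2 v) := by
  have h0 : (1 : H →L[ℂ] H) + adjoint T1 * (adjoint T2 * (T1 * T2))
      = adjoint T1 * T1 + adjoint T2 * T2 := by
    rw [← sub_eq_zero, ← hdef]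
    abel
  have h1 := congrArg (fun L : H →L[ℂ] H => (inner ℂ u (L v) : ℂ)) h0
  simpa only [ContinuousLinearMap.add_apply, ContinuousLinearMap.one_apply,
    ContinuousLinearMap.mul_apply, inner_add_right,
    ContinuousLinearMap.adjoint_inner_right] using h1

end Gram

lemma gram_match {H K : Type*} [NormedAddCommGroup H] [InnerProductSpace ℂ H] [CompleteSpace H]
    [NormedAddCommGroup K] [InnerProductSpace ℂ K] [CompleteSpace K]
    (T1 T2 : H →L[ℂ] H) (S1 S2 : K →L[ℂ] K)
    (hcommT : T1 * T2 = T2 * T1) (hcommS : S1 * S2 = S2 * S1)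
    (hdefT : (1 : H →L[ℂ] H) - adjoint T1 * T1 - adjoint T2 * T2
      + adjoint T1 * (adjoint T2 * (T1 * T2)) = 0)
    (hdefS : (1 : K →L[ℂ] K) - adjoint S1 * S1 - adjoint S2 * S2
      + adjoint S1 * (adjoint S2 * (S1 * S2)) = 0)
    (f0 : H) (g0 : K)
    (hWT : IsWandering T1 T2 (Submodule.span ℂ {f0}))
    (hWS : IsWandering S1 S2 (Submodule.span ℂ {g0}))
    (hmatch1 : ∀ m p : ℕ, (inner ℂ ((T1 ^ m) f0) ((T1 ^ p) f0) : ℂ)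
      = (inner ℂ ((S1 ^ m) g0) ((S1 ^ p) g0) : ℂ))
    (hmatch2 : ∀ m p : ℕ, (inner ℂ ((T2 ^ m) f0) ((T2 ^ p) f0) : ℂ)
      = (inner ℂ ((S2 ^ m) g0) ((S2 ^ p) g0) : ℂ)) :
    ∀ m n p q : ℕ, (inner ℂ ((T1 ^ m * T2 ^ n) f0) ((T1 ^ p * T2 ^ q) f0) : ℂ)
      = (inner ℂ ((S1 ^ m * S2 ^ n) g0) ((S1 ^ p * S2 ^ q) g0) : ℂ) := by
  have hf0 : f0 ∈ Submodule.span ℂ {f0} := Submodule.mem_span_singleton_self f0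
  have hg0 : g0 ∈ Submodule.span ℂ {g0} := Submodule.mem_span_singleton_self g0
  -- step identities
  have stepT : ∀ m n p q : ℕ,
      (inner ℂ ((T1 ^ m * T2 ^ n) f0) ((T1 ^ p * T2 ^ q) f0) : ℂ)
        + inner ℂ ((T1 ^ (m+1) * T2 ^ (n+1)) f0) ((T1 ^ (p+1) * T2 ^ (q+1)) f0)
      = inner ℂ ((T1 ^ (m+1) * T2 ^ n) f0) ((T1 ^ (p+1) * T2 ^ q) f0)
        + inner ℂ ((T1 ^ m * T2 ^ (n+1)) f0) ((T1 ^ p * T2 ^ (q+1)) f0) := by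
    intro m n p q
    have h := rec_identity T1 T2 hdefT ((T1 ^ m * T2 ^ n) f0) ((T1 ^ p * T2 ^ q) f0)
    rw [mono_step1 T1 T2 f0 m n, mono_step1 T1 T2 f0 p q,
      mono_step2 T1 T2 hcommT f0 m n, mono_step2 T1 T2 hcommT f0 p q,
      mono_step2 T1 T2 hcommT f0 (m+1) n, mono_step1 T1 T2 f0 p (q+1)] at h
    exact h
  have stepS : ∀ m n p q : ℕ,
      (inner ℂ ((S1 ^ m * S2 ^ n) g0) ((S1 ^ p * S2 ^ q) g0) : ℂ)
        + inner ℂ ((S1 ^ (m+1) * S2 ^ (n+1)) g0) ((S1 ^ (p+1) * S2 ^ (q+1)) g0)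
      = inner ℂ ((S1 ^ (m+1) * S2 ^ n) g0) ((S1 ^ (p+1) * S2 ^ q) g0)
        + inner ℂ ((S1 ^ m * S2 ^ (n+1)) g0) ((S1 ^ p * S2 ^ (q+1)) g0) := by
    intro m n p q
    have h := rec_identity S1 S2 hdefS ((S1 ^ m * S2 ^ n) g0) ((S1 ^ p * S2 ^ q) g0)
    rw [mono_step1 S1 S2 g0 m n, mono_step1 S1 S2 g0 p q,
      mono_step2 S1 S2 hcommS g0 m n, mono_step2 S1 S2 hcommS g0 p q,
      mono_step2 S1 S2 hcommS g0 (m+1) n, mono_step1 S1 S2 g0 p (q+1)] at h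
    exact h
  suffices key : ∀ N m n p q : ℕ, m + n + p + q = N →
      (inner ℂ ((T1 ^ m * T2 ^ n) f0) ((T1 ^ p * T2 ^ q) f0) : ℂ)
        = (inner ℂ ((S1 ^ m * S2 ^ n) g0) ((S1 ^ p * S2 ^ q) g0) : ℂ) by
    intro m n p q; exact key (m + n + p + q) m n p q rfl
  intro N
  induction N using Nat.strong_induction_on with
  | _ N ih =>
    intro m n p q hsum
    by_cases hn : n = 0
    · subst hn
      by_cases hq : q = 0
      · subst hq; simpa using hmatch1 m p
      · have hT := (hWT f0 hf0 f0 hf0 m p q).1 hq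
        have hS := (hWS g0 hg0 g0 hg0 m p q).1 hq
        simpa using hT.trans hS.symm
    · by_cases hq : q = 0
      · subst hq
        have hT := (hWT f0 hf0 f0 hf0 p m n).1 hn
        have hS := (hWS g0 hg0 g0 hg0 p m n).1 hn
        rw [← inner_conj_symm ((T1 ^ m * T2 ^ n) f0), ← inner_conj_symm ((S1 ^ m * S2 ^ n) g0)]
        simp only [pow_zero, mul_one] at *
        rw [hT, hS]
      · by_cases hm : m = 0
        · subst hm
          by_cases hp : p = 0
          · subst hp; simpa using hmatch2 n q
          · have hT := (hWT f0 hf0 f0 hf0 n p q).2 hp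
            have hS := (hWS g0 hg0 g0 hg0 n p q).2 hp
            simpa using hT.trans hS.symm
        · by_cases hp : p = 0
          · subst hp
            have hT := (hWT f0 hf0 f0 hf0 q m n).2 hm
            have hS := (hWS g0 hg0 g0 hg0 q m n).2 hm
            rw [← inner_conj_symm ((T1 ^ m * T2 ^ n) f0),
              ← inner_conj_symm ((S1 ^ m * S2 ^ n) g0)]
            simp only [pow_zero, one_mul] at *
            rw [hT, hS]
          · obtain ⟨m', rfl⟩ := Nat.exists_eq_succ_of_ne_zero hm
            obtain ⟨n', rfl⟩ := Nat.exists_eq_succ_of_ne_zero hn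
            obtain ⟨p', rfl⟩ := Nat.exists_eq_succ_of_ne_zero hp
            obtain ⟨q', rfl⟩ := Nat.exists_eq_succ_of_ne_zero hq
            have h1 := ih ((m' + 1) + n' + (p' + 1) + q') (by omega) (m' + 1) n' (p' + 1) q' rfl
            have h2 := ih (m' + (n' + 1) + p' + (q' + 1)) (by omega) m' (n' + 1) p' (q' + 1) rfl
            have h3 := ih (m' + n' + p' + q') (by omega) m' n' p' q' rfl
            have hT := stepT m' n' p' q'
            have hS := stepS m' n' p' q'
            simp only [Nat.succ_eq_add_one]
            linear_combination hT - hS + h1 + h2 - h3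


theorem stmt15 {K : Type*} [NormedAddCommGroup K] [InnerProductSpace ℂ K] [CompleteSpace K]
    (T1 T2 : H →L[ℂ] H) (S1 S2 : K →L[ℂ] K)
    (hcommT : T1 * T2 = T2 * T1) (hcommS : S1 * S2 = S2 * S1)
    (hdefT : (1 : H →L[ℂ] H) - adjoint T1 * T1 - adjoint T2 * T2
      + adjoint T1 * (adjoint T2 * (T1 * T2)) = 0)
    (hdefS : (1 : K →L[ℂ] K) - adjoint S1 * S1 - adjoint S2 * S2
      + adjoint S1 * (adjoint S2 * (S1 * S2)) = 0)
    (f0 : H) (g0 : K)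
    (hcycT : (Submodule.span ℂ {x : H | ∃ m n : ℕ, x = (T1 ^ m * T2 ^ n) f0}).topologicalClosure = ⊤)
    (hcycS : (Submodule.span ℂ {y : K | ∃ m n : ℕ, y = (S1 ^ m * S2 ^ n) g0}).topologicalClosure = ⊤)
    (hWT : IsWandering T1 T2 (Submodule.span ℂ {f0}))
    (hWS : IsWandering S1 S2 (Submodule.span ℂ {g0}))
    (hmatch1 : ∀ m p : ℕ, (inner ℂ ((T1 ^ m) f0) ((T1 ^ p) f0) : ℂ)
      = (inner ℂ ((S1 ^ m) g0) ((S1 ^ p) g0) : ℂ))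
    (hmatch2 : ∀ m p : ℕ, (inner ℂ ((T2 ^ m) f0) ((T2 ^ p) f0) : ℂ)
      = (inner ℂ ((S2 ^ m) g0) ((S2 ^ p) g0) : ℂ))
    (hnorm : ‖f0‖ = ‖g0‖) :
    ∃ U : H ≃ₗᵢ[ℂ] K, U f0 = g0 ∧ (∀ x : H, U (T1 x) = S1 (U x)) ∧
      (∀ x : H, U (T2 x) = S2 (U x)) := by
  have hgm := gram_match T1 T2 S1 S2 hcommT hcommS hdefT hdefS f0 g0 hWT hWS hmatch1 hmatch2
  let xT : ℕ × ℕ → H := fun mn => (T1 ^ mn.1 * T2 ^ mn.2) f0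
  let yS : ℕ × ℕ → K := fun mn => (S1 ^ mn.1 * S2 ^ mn.2) g0
  have hsetT : {x : H | ∃ m n : ℕ, x = (T1 ^ m * T2 ^ n) f0} = Set.range xT := by
    ext z
    constructor
    · rintro ⟨m, n, rfl⟩; exact ⟨(m, n), rfl⟩
    · rintro ⟨⟨m, n⟩, rfl⟩; exact ⟨m, n, rfl⟩
  have hsetS : {y : K | ∃ m n : ℕ, y = (S1 ^ m * S2 ^ n) g0} = Set.range yS := by
    ext z
    constructor
    · rintro ⟨m, n, rfl⟩; exact ⟨(m, n), rfl⟩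
    · rintro ⟨⟨m, n⟩, rfl⟩; exact ⟨m, n, rfl⟩
  have hdenseT' : Dense ((Submodule.span ℂ
      {x : H | ∃ m n : ℕ, x = (T1 ^ m * T2 ^ n) f0} : Submodule ℂ H) : Set H) :=
    Submodule.dense_iff_topologicalClosure_eq_top.mpr hcycT
  have hdenseS' : Dense ((Submodule.span ℂ
      {y : K | ∃ m n : ℕ, y = (S1 ^ m * S2 ^ n) g0} : Submodule ℂ K) : Set K) :=
    Submodule.dense_iff_topologicalClosure_eq_top.mpr hcycS
  have hdenseT : Dense ((Submodule.span ℂ (Set.range xT) : Submodule ℂ H) : Set H) := by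
    rw [← hsetT]; exact hdenseT'
  have hdenseS : Dense ((Submodule.span ℂ (Set.range yS) : Submodule ℂ K) : Set K) := by
    rw [← hsetS]; exact hdenseS'
  have hgram : ∀ i j : ℕ × ℕ, (inner ℂ (xT i) (xT j) : ℂ) = inner ℂ (yS i) (yS j) := fun i j =>
    hgm i.1 i.2 j.1 j.2
  obtain ⟨Φ, hΦx, hΦn⟩ := aux_extend xT yS hgram hdenseT
  obtain ⟨Ψ, hΨy, hΨn⟩ := aux_extend yS xT (fun i j => (hgram i j).symm) hdenseS
  have hΨΦ : Ψ.comp Φ = ContinuousLinearMap.id ℂ H := by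
    apply ContinuousLinearMap.ext_on hdenseT'
    rintro z ⟨m, n, rfl⟩
    have h1 : (T1 ^ m * T2 ^ n) f0 = xT (m, n) := rfl
    rw [ContinuousLinearMap.comp_apply, ContinuousLinearMap.id_apply, h1, hΦx (m, n)]
    exact hΨy (m, n)
  have hΦΨ : Φ.comp Ψ = ContinuousLinearMap.id ℂ K := by
    apply ContinuousLinearMap.ext_on hdenseS'
    rintro z ⟨m, n, rfl⟩
    have h1 : (S1 ^ m * S2 ^ n) g0 = yS (m, n) := rfl
    rw [ContinuousLinearMap.comp_apply, ContinuousLinearMap.id_apply, h1, hΨy (m, n)]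
    exact hΦx (m, n)
  have hint1 : Φ.comp T1 = S1.comp Φ := by
    apply ContinuousLinearMap.ext_on hdenseT'
    rintro z ⟨m, n, rfl⟩
    rw [ContinuousLinearMap.comp_apply, ContinuousLinearMap.comp_apply,
      mono_step1 T1 T2 f0 m n]
    have e1 : Φ ((T1 ^ (m + 1) * T2 ^ n) f0) = (S1 ^ (m + 1) * S2 ^ n) g0 := hΦx (m + 1, n)
    have e2 : Φ ((T1 ^ m * T2 ^ n) f0) = (S1 ^ m * S2 ^ n) g0 := hΦx (m, n)
    rw [e1, e2]
    exact (mono_step1 S1 S2 g0 m n).symm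
  have hint2 : Φ.comp T2 = S2.comp Φ := by
    apply ContinuousLinearMap.ext_on hdenseT'
    rintro z ⟨m, n, rfl⟩
    rw [ContinuousLinearMap.comp_apply, ContinuousLinearMap.comp_apply,
      mono_step2 T1 T2 hcommT f0 m n]
    have e1 : Φ ((T1 ^ m * T2 ^ (n + 1)) f0) = (S1 ^ m * S2 ^ (n + 1)) g0 := hΦx (m, n + 1)
    have e2 : Φ ((T1 ^ m * T2 ^ n) f0) = (S1 ^ m * S2 ^ n) g0 := hΦx (m, n)
    rw [e1, e2]
    exact (mono_step2 S1 S2 hcommS g0 m n).symm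
  have hc1 : Φ.toLinearMap.comp Ψ.toLinearMap = LinearMap.id :=
    LinearMap.ext fun z => ContinuousLinearMap.ext_iff.mp hΦΨ z
  have hc2 : Ψ.toLinearMap.comp Φ.toLinearMap = LinearMap.id :=
    LinearMap.ext fun z => ContinuousLinearMap.ext_iff.mp hΨΦ z
  refine ⟨{ toLinearEquiv := LinearEquiv.ofLinear Φ.toLinearMap Ψ.toLinearMap hc1 hc2,
            norm_map' := hΦn }, ?_, ?_, ?_⟩
  · show Φ f0 = g0
    simpa [xT, yS] using hΦx (0, 0)
  · intro z
    exact ContinuousLinearMap.ext_iff.mp hint1 z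
  · intro z
    exact ContinuousLinearMap.ext_iff.mp hint2 z
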